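/- Assume pd_R(R_S) ≤ 1. Then the class of S-strongly flat R-modules is closed under kernels of epimorphisms: if 0 → A → B → C → 0 is exact with B and C S-strongly flat, then A is S-strongly flat. -/

import Mathlib

open CategoryTheory

noncomputable def ext1Zero (R : Type) [CommRing R] (M N : Type) [AddCommGroup M] [Module R M]
    [AddCommGroup N] [Module R N] : Prop :=
  Subsingleton (((Ext R (ModuleCat R) 1).obj (Opposite.op (ModuleCat.of R M))).obj
    (ModuleCat.of R N))

/-- An `R`-module `C` is `S`-weakly cotorsion if `Ext¹_R(R_S, C) = 0`. -/
noncomputable def SWeaklyCotorsion (R : Type) [CommRing R] (S : Submonoid R) (C : Type)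
    [AddCommGroup C] [Module R C] : Prop :=
  ext1Zero R (Localization S) C

/-- An `R`-module `F` is `S`-strongly flat if `Ext¹_R(F, C) = 0` for every
`S`-weakly cotorsion `R`-module `C`. -/
noncomputable def SStronglyFlat (R : Type) [CommRing R] (S : Submonoid R) (F : Type)
    [AddCommGroup F] [Module R F] : Prop :=
  ∀ (C : Type) [AddCommGroup C] [Module R C], SWeaklyCotorsion R S C → ext1Zero R F C

/-- `pdLeOne R M` says that the projective dimension of `M` over `R` is at most `1`,
i.e. there is a short exact sequence `0 → P₁ → P₀ → M → 0` with `P₀, P₁` projective. -/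
def pdLeOne (R : Type) [CommRing R] (M : Type) [AddCommGroup M] [Module R M] : Prop :=
  ∃ (P₀ P₁ : ModuleCat R) (f : P₁ ⟶ P₀) (g : P₀ ⟶ ModuleCat.of R M),
    Projective P₀ ∧ Projective P₁ ∧
    Function.Injective f ∧ Function.Surjective g ∧ LinearMap.range f.hom = LinearMap.ker g.hom

/-!
To see `Ext¹(A, Y) = 0` for an `S`-weakly cotorsion `Y`, embed `Y` into an injective module
`I`. Since `pd R_S ≤ 1`, every quotient of an injective module is `S`-weakly cotorsion, so
`Ext¹(C, I ⧸ Y) = 0`. Hence every map `A → I ⧸ Y` extends along `f` to `B`, and the extension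
lifts to `I` because `Ext¹(B, Y) = 0`; this lifting property for `A` is equivalent to
`Ext¹(A, Y) = 0`. Each `Ext¹`-vanishing is turned into such an extension or lifting problem by
computing `Ext¹` on a projective resolution that starts with a given projective presentation.
-/

open Limits

universe u v

namespace CategoryTheory.ProjectiveResolution

variable {C : Type u} [Category.{v} C] [Abelian C] [EnoughProjectives C]

noncomputable def ofPresentationComplex {P₀ P₁ : C} (d : P₁ ⟶ P₀) : ChainComplex C ℕ :=
  ChainComplex.mk' P₀ P₁ d fun f => ⟨_, Projective.d f, by
    simp only [Projective.d]; erw [Category.assoc, kernel.condition, comp_zero]⟩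

lemma ofPresentationComplex_d_one_zero {P₀ P₁ : C} (d : P₁ ⟶ P₀) :
    (ofPresentationComplex d).d 1 0 = d :=
  ChainComplex.mk'_d_1_0 _ _ _ _

lemma ofPresentationComplex_exactAt_succ {P₀ P₁ : C} (d : P₁ ⟶ P₀) (n : ℕ) :
    (ofPresentationComplex d).ExactAt (n + 1) := by
  have exact_id_comp {X Y Z : C} {a : X ⟶ Y} {b : Y ⟶ Z} (w) (w')
      (h : (ShortComplex.mk a b w).Exact) : (ShortComplex.mk (𝟙 X ≫ a) (𝟙 Y ≫ b) w').Exact := by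
    simpa only [Category.id_comp] using h
  rw [HomologicalComplex.exactAt_iff' _ (n + 1 + 1) (n + 1) n (by simp) (by simp)]
  dsimp [ofPresentationComplex, HomologicalComplex.sc', HomologicalComplex.shortComplexFunctor',
      ChainComplex.mk', ChainComplex.mk, ChainComplex.of.d]
  simp only [↓reduceIte]
  match n with
  | 0 => exact exact_id_comp _ _ (exact_d_f _)
  | n + 1 => exact exact_id_comp _ _ (exact_d_f _)

noncomputable def ofPresentation {P₀ P₁ Z : C} [Projective P₀] [Projective P₁]
    (d : P₁ ⟶ P₀) (ε : P₀ ⟶ Z) (w : d ≫ ε = 0) (hexact : (ShortComplex.mk d ε w).Exact) [Epi ε] :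
    ProjectiveResolution Z where
  complex := ofPresentationComplex d
  projective
    | 0 => ‹Projective P₀›
    | 1 => ‹Projective P₁›
    | 2 => Projective.projective_over _
    | _ + 3 => Projective.projective_over _
  π := (ChainComplex.toSingle₀Equiv _ _).symm ⟨ε, by rw [ofPresentationComplex_d_one_zero]; exact w⟩
  quasiIso := ⟨fun n => by
    cases n with
    | zero =>
      rw [ChainComplex.quasiIsoAt₀_iff, ShortComplex.quasiIso_iff_of_zeros']
      · refine (ShortComplex.exact_and_epi_g_iff_of_iso ?_).2 ⟨hexact, ‹Epi ε›⟩
        exact ShortComplex.isoMk (Iso.refl _) (Iso.refl _) (Iso.refl _)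
          ((Category.id_comp d).trans
            ((ofPresentationComplex_d_one_zero d).symm.trans (Category.comp_id _).symm))
          ((Category.id_comp ε).trans
            ((ChainComplex.toSingle₀Equiv_symm_apply_f_zero (C := ofPresentationComplex d) ε
              _).symm.trans (Category.comp_id _).symm))
      all_goals rfl
    | succ n =>
      rw [quasiIsoAt_iff_exactAt']
      · exact ofPresentationComplex_exactAt_succ d n
      · exact ChainComplex.exactAt_succ_single_obj _ _⟩

lemma ofPresentation_complex_d_one_zero {P₀ P₁ Z : C} [Projective P₀] [Projective P₁]
    (d : P₁ ⟶ P₀) (ε : P₀ ⟶ Z) (w : d ≫ ε = 0) (hexact : (ShortComplex.mk d ε w).Exact)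
    [Epi ε] : (ofPresentation d ε w hexact).complex.d 1 0 = d :=
  ofPresentationComplex_d_one_zero d

variable {R : Type*} [Ring R] [Linear R C]

lemma subsingleton_ext_one_iff {X : C} (P : ProjectiveResolution X) (Y : C) :
    Subsingleton (((Ext R C 1).obj (Opposite.op X)).obj Y) ↔
      ∀ v : P.complex.X 1 ⟶ Y, P.complex.d 2 1 ≫ v = 0 →
        ∃ u : P.complex.X 0 ⟶ Y, P.complex.d 1 0 ≫ u = v := by
  rw [(P.isoExt 1 Y).toLinearEquiv.toEquiv.subsingleton_congr,
    ← ModuleCat.isZero_iff_subsingleton, ← HomologicalComplex.exactAt_iff_isZero_homology,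
    HomologicalComplex.exactAt_iff' _ 0 1 2 (by simp) (by simp),
    ShortComplex.moduleCat_exact_iff]
  rfl

end CategoryTheory.ProjectiveResolution

namespace CategoryTheory.ShortComplex.ShortExact

variable {C : Type u} [Category.{v} C] [Abelian C] [EnoughProjectives C]
  {R : Type*} [Ring R] [Linear R C]

lemma subsingleton_ext_one_iff_forall_extend {S : ShortComplex C} (hS : S.ShortExact)
    [Projective S.X₂] (Y : C) :
    Subsingleton (((Ext R C 1).obj (Opposite.op S.X₃)).obj Y) ↔
      ∀ φ : S.X₁ ⟶ Y, ∃ ψ : S.X₂ ⟶ Y, S.f ≫ ψ = φ := by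
  have := hS.mono_f
  have := hS.epi_g
  let d : Projective.over S.X₁ ⟶ S.X₂ := Projective.π _ ≫ S.f
  have hexact : (ShortComplex.mk d S.g (by simp [d])).Exact :=
    (ShortComplex.exact_iff_of_epi_of_isIso_of_mono
      { τ₁ := Projective.π S.X₁, τ₂ := 𝟙 _, τ₃ := 𝟙 _ : ShortComplex.mk d S.g _ ⟶ S }).2 hS.exact
  let P := ProjectiveResolution.ofPresentation d S.g _ hexact
  let p : P.complex.X 1 ⟶ S.X₁ := Projective.π S.X₁
  have : Epi p := inferInstanceAs (Epi (Projective.π S.X₁))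
  let f : S.X₁ ⟶ P.complex.X 0 := S.f
  have : Mono f := inferInstanceAs (Mono S.f)
  have hd : P.complex.d 1 0 = p ≫ f := ProjectiveResolution.ofPresentation_complex_d_one_zero ..
  have hzero : P.complex.d 2 1 ≫ p = 0 := by
    rw [← cancel_mono f, Category.assoc, ← hd, P.complex.d_comp_d, zero_comp]
  have hP : (ShortComplex.mk _ _ hzero).Exact :=
    (ShortComplex.exact_iff_of_epi_of_isIso_of_mono
      ({ τ₁ := 𝟙 _, τ₂ := 𝟙 _, τ₃ := f, comm₂₃ := by simp [hd] } :
        ShortComplex.mk _ _ hzero ⟶ ShortComplex.mk _ _ (P.complex.d_comp_d 2 1 0))).2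
      (P.exact_succ 0)
  rw [P.subsingleton_ext_one_iff]
  constructor
  · intro h φ
    obtain ⟨u, hu⟩ := h (p ≫ φ) (by rw [← Category.assoc, hzero, zero_comp])
    exact ⟨u, by rwa [hd, Category.assoc, cancel_epi] at hu⟩
  · intro h v hv
    obtain ⟨ψ, hψ⟩ : ∃ ψ : P.complex.X 0 ⟶ Y, f ≫ ψ = hP.desc v hv := h _
    exact ⟨ψ, by rw [hd, Category.assoc, hψ, hP.g_desc]⟩

end CategoryTheory.ShortComplex.ShortExact

section ModuleExt

variable {R : Type} [CommRing R]

lemma LinearMap.exists_comp_eq_of_surjective {M N Y : Type} [AddCommGroup M] [Module R M]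
    [AddCommGroup N] [Module R N] [AddCommGroup Y] [Module R Y] {e : M →ₗ[R] N}
    (he : Function.Surjective e) {v : M →ₗ[R] Y} (hv : ∀ x, e x = 0 → v x = 0) :
    ∃ h : N →ₗ[R] Y, h ∘ₗ e = v :=
  ⟨(LinearMap.ker e).liftQ v hv ∘ₗ (e.quotKerEquivOfSurjective he).symm.toLinearMap, by
    ext x
    simp only [LinearMap.coe_comp, LinearEquiv.coe_coe, Function.comp_apply,
      LinearMap.quotKerEquivOfSurjective_symm_apply]
    rfl⟩

lemma ext1Zero_iff_forall_extend {K P X Y : Type} [AddCommGroup K] [Module R K]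
    [AddCommGroup P] [Module R P] [Module.Projective R P] [AddCommGroup X] [Module R X]
    [AddCommGroup Y] [Module R Y] {ι : K →ₗ[R] P} {ε : P →ₗ[R] X}
    (hι : Function.Injective ι) (hε : Function.Surjective ε) (hιε : Function.Exact ι ε) :
    ext1Zero R X Y ↔ ∀ φ : K →ₗ[R] Y, ∃ ψ : P →ₗ[R] Y, ψ ∘ₗ ι = φ := by
  have : Projective (ModuleCat.of R P) := (IsProjective.iff_projective P).1 inferInstance
  have hS := ModuleCat.shortComplex_shortExact
    (ShortComplex.mk (ModuleCat.ofHom ι) (ModuleCat.ofHom ε)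
      (ModuleCat.hom_ext hιε.linearMap_comp_eq_zero)) hιε hι hε
  refine (hS.subsingleton_ext_one_iff_forall_extend (ModuleCat.of R Y)).trans
    ⟨fun h φ => ?_, fun h φ => ?_⟩
  · obtain ⟨ψ, hψ⟩ := h (ModuleCat.ofHom φ)
    exact ⟨ψ.hom, congrArg ModuleCat.Hom.hom hψ⟩
  · obtain ⟨ψ, hψ⟩ := h φ.hom
    exact ⟨ModuleCat.ofHom ψ, ModuleCat.hom_ext hψ⟩

variable {X Y I Q : Type} [AddCommGroup X] [Module R X] [AddCommGroup Y] [Module R Y]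
  [AddCommGroup I] [Module R I] [AddCommGroup Q] [Module R Q]

lemma ext1Zero_iff_forall_lift [Module.Injective R I] {j : Y →ₗ[R] I} {π : I →ₗ[R] Q}
    (hj : Function.Injective j) (hπ : Function.Surjective π) (hjπ : Function.Exact j π) :
    ext1Zero R X Y ↔ ∀ h : X →ₗ[R] Q, ∃ h' : X →ₗ[R] I, π ∘ₗ h' = h := by
  let ε : (X →₀ R) →ₗ[R] X := Finsupp.linearCombination R id
  have hε : Function.Surjective ε := Finsupp.linearCombination_id_surjective R X
  rw [ext1Zero_iff_forall_extend (K := LinearMap.ker ε) (P := X →₀ R)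
    (ι := (LinearMap.ker ε).subtype) (LinearMap.ker ε).injective_subtype hε
    (LinearMap.exact_subtype_ker_map ε)]
  constructor
  · intro hext h
    obtain ⟨η, hη⟩ := Module.projective_lifting_property π (h ∘ₗ ε) hπ
    have hηK (k : LinearMap.ker ε) : η k ∈ LinearMap.range j :=
      (hjπ _).1 (by simp [← LinearMap.comp_apply, hη])
    obtain ⟨ψ, hψ⟩ :=
      hext (LinearMap.codRestrictOfInjective (η ∘ₗ (LinearMap.ker ε).subtype) j hj hηK)
    obtain ⟨h', hh'⟩ := LinearMap.exists_comp_eq_of_surjective hε (v := η - j ∘ₗ ψ) fun x hx => by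
      have hjψ : j (ψ x) = η x := (congrArg j (LinearMap.congr_fun hψ ⟨x, hx⟩)).trans
        (LinearMap.codRestrictOfInjective_comp_apply _ _ _ _ _)
      simp [hjψ]
    refine ⟨h', LinearMap.ext fun x => ?_⟩
    obtain ⟨y, rfl⟩ := hε x
    simp [← LinearMap.comp_apply h' ε, hh', hjπ.apply_apply_eq_zero,
      ← LinearMap.comp_apply π η, hη]
  · intro hlift φ
    obtain ⟨η, hη⟩ := Module.Injective.out (X := LinearMap.ker ε) (Y := X →₀ R)
      (LinearMap.ker ε).subtype (LinearMap.ker ε).injective_subtype (j ∘ₗ φ)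
    obtain ⟨h, hh⟩ := LinearMap.exists_comp_eq_of_surjective hε (v := π ∘ₗ η) fun x hx => by
      simpa [hjπ.apply_apply_eq_zero] using congrArg π (hη ⟨x, hx⟩)
    obtain ⟨h', hh'⟩ := hlift h
    have hD (x : X →₀ R) : (η - h' ∘ₗ ε) x ∈ LinearMap.range j := by
      refine (hjπ _).1 ?_
      simp [← LinearMap.comp_apply π h', hh', ← LinearMap.comp_apply h ε, hh]
    refine ⟨LinearMap.codRestrictOfInjective _ j hj hD, LinearMap.ext fun k => hj ?_⟩
    simpa using hη k

lemma exists_comp_eq_of_ext1Zero {A B C : Type} [AddCommGroup A] [Module R A]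
    [AddCommGroup B] [Module R B] [AddCommGroup C] [Module R C] {f : A →ₗ[R] B} {g : B →ₗ[R] C}
    (hf : Function.Injective f) (hg : Function.Surjective g) (hfg : Function.Exact f g)
    (hC : ext1Zero R C Y) (φ : A →ₗ[R] Y) : ∃ ψ : B →ₗ[R] Y, ψ ∘ₗ f = φ := by
  let ε : (B →₀ R) →ₗ[R] B := Finsupp.linearCombination R id
  have hε : Function.Surjective ε := Finsupp.linearCombination_id_surjective R B
  let K := LinearMap.ker (g ∘ₗ ε)
  have hK (k : K) : ε k ∈ LinearMap.range f := (hfg _).1 k.2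
  let ρ : K →ₗ[R] A := LinearMap.codRestrictOfInjective (ε ∘ₗ K.subtype) f hf hK
  have hρ (k : K) : f (ρ k) = ε k := LinearMap.codRestrictOfInjective_comp_apply _ _ _ _ _
  obtain ⟨ψ₀, hψ₀⟩ := (ext1Zero_iff_forall_extend (K := K) (P := B →₀ R) (ι := K.subtype)
    K.injective_subtype (hg.comp hε) (LinearMap.exact_subtype_ker_map _)).1 hC (φ ∘ₗ ρ)
  obtain ⟨ψ, hψ⟩ := LinearMap.exists_comp_eq_of_surjective hε (v := ψ₀) fun x hx => by
    have hxK : x ∈ K := by simp [K, hx]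
    have : ρ ⟨x, hxK⟩ = 0 := hf (by rw [hρ, map_zero]; exact hx)
    simpa [this] using LinearMap.congr_fun hψ₀ ⟨x, hxK⟩
  refine ⟨ψ, LinearMap.ext fun a => ?_⟩
  obtain ⟨x, hx⟩ := hε (f a)
  have hxK : x ∈ K := by simp [K, hx, hfg.apply_apply_eq_zero]
  have : ρ ⟨x, hxK⟩ = a := hf (by rw [hρ]; exact hx)
  rw [LinearMap.comp_apply, ← hx, ← LinearMap.comp_apply ψ, hψ, ← this]
  exact LinearMap.congr_fun hψ₀ ⟨x, hxK⟩

lemma ext1Zero_of_pdLeOne [Module.Injective R I] (hX : pdLeOne R X) {π : I →ₗ[R] Q}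
    (hπ : Function.Surjective π) : ext1Zero R X Q := by
  obtain ⟨P₀, P₁, d, ε, hP₀, hP₁, hd, hε, hdε⟩ := hX
  have : Module.Projective R P₀ := (IsProjective.iff_projective P₀).2 hP₀
  have : Module.Projective R P₁ := (IsProjective.iff_projective P₁).2 hP₁
  rw [ext1Zero_iff_forall_extend hd hε (LinearMap.exact_iff.2 hdε.symm)]
  intro φ
  obtain ⟨φ', hφ'⟩ := Module.projective_lifting_property π φ hπ
  obtain ⟨ψ, hψ⟩ := Module.Injective.out d.hom hd φ'
  exact ⟨π ∘ₗ ψ, LinearMap.ext fun x => by simp [hψ, ← hφ']⟩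

end ModuleExt

theorem stmt_16 (R : Type) [CommRing R] (S : Submonoid R)
    (hpd : pdLeOne R (Localization S))
    (A B C : Type) [AddCommGroup A] [Module R A] [AddCommGroup B] [Module R B]
    [AddCommGroup C] [Module R C]
    (f : A →ₗ[R] B) (g : B →ₗ[R] C)
    (hf : Function.Injective f) (hg : Function.Surjective g)
    (hfg : LinearMap.range f = LinearMap.ker g)
    (hB : SStronglyFlat R S B) (hC : SStronglyFlat R S C) :
    SStronglyFlat R S A := by
  intro Y _ _ hY
  let I := Injective.under (ModuleCat.of R Y)
  have : Module.Injective R I :=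
    (Module.injective_iff_injective_object R I).2 (inferInstanceAs (Injective (Injective.under _)))
  let j : Y →ₗ[R] I := (Injective.ι (ModuleCat.of R Y)).hom
  have hj : Function.Injective j := (ModuleCat.mono_iff_injective _).1 inferInstance
  let π := (LinearMap.range j).mkQ
  have hπ : Function.Surjective π := Submodule.mkQ_surjective _
  have hjπ : Function.Exact j π := LinearMap.exact_map_mkQ_range j
  have hCQ : ext1Zero R C (I ⧸ LinearMap.range j) := hC _ (ext1Zero_of_pdLeOne hpd hπ)
  rw [ext1Zero_iff_forall_lift hj hπ hjπ]
  intro h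
  obtain ⟨k, hk⟩ := exists_comp_eq_of_ext1Zero hf hg (LinearMap.exact_iff.2 hfg.symm) hCQ h
  obtain ⟨k', hk'⟩ := (ext1Zero_iff_forall_lift hj hπ hjπ).1 (hB Y hY) k
  exact ⟨k' ∘ₗ f, by rw [← LinearMap.comp_assoc, hk', hk]⟩
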